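/- Let n ≥ 2 and 0 < r < 1, and let Σ = {x ∈ ℝ^{n+1} : |x| = r} be the sphere of radius r centered at the origin. For x ∈ Σ with x_{n+1} ≠ r² define Φ(x) = ( (x₁, …, x_n)/(r² − x_{n+1}) , r√(1 − r²)/|r² − x_{n+1}| ) ∈ ℝ^n × ℝ (the surface map of Σ). Then the image {Φ(x) : x ∈ Σ, x_{n+1} ≠ r²} is exactly the union of the two upper hyperboloid sheets { (y, t) ∈ ℝ^n × ℝ : t > 0 and (t + r/√(1 − r²))² − |y|² = 1/(1 − r²) } ∪ { (y, t) ∈ ℝ^n × ℝ : t > 0 and (t − r/√(1 − r²))² − |y|² = 1/(1 − r²) }. -/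

import Mathlib

/-!
Write a point of `Σ` off `Σ′` as `x = (d • y, r² − d)` with `d ≠ 0`, and put `q = r√(1 − r²)/d`.
Then `Φ(x) = (y, |q|)`, and `|x| = r` is equivalent to the single hyperboloid equation
`(q + r/√(1 − r²))² − |y|² = 1/(1 − r²)`. The points with `q > 0` give the sheet with `+`, the points
with `q < 0` the sheet with `−`.
-/

noncomputable def spherePhi (n : ℕ) (r : ℝ) (x : EuclideanSpace ℝ (Fin (n + 1))) :
    EuclideanSpace ℝ (Fin n) × ℝ :=
  ((WithLp.toLp 2 (fun i : Fin n => x i.castSucc / (r ^ 2 - x (Fin.last n))) : EuclideanSpace ℝ (Fin n)),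
    r * Real.sqrt (1 - r ^ 2) / |r ^ 2 - x (Fin.last n)|)

open Real

lemma EuclideanSpace.norm_sq_eq_of_castSucc_eq_mul {n : ℕ} {x : EuclideanSpace ℝ (Fin (n + 1))}
    {y : EuclideanSpace ℝ (Fin n)} {d : ℝ} (h : ∀ i, x i.castSucc = d * y i) :
    ‖x‖ ^ 2 = d ^ 2 * ‖y‖ ^ 2 + x (Fin.last n) ^ 2 := by
  simp only [EuclideanSpace.real_norm_sq_eq, Fin.sum_univ_castSucc, h, mul_pow, Finset.mul_sum]

lemma sq_mul_add_sq_eq_sq_iff {r c d a : ℝ} (hc : c ^ 2 = 1 - r ^ 2) (hc0 : c ≠ 0) (hd : d ≠ 0) :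
    d ^ 2 * a + (r ^ 2 - d) ^ 2 = r ^ 2 ↔ (r * c / d + r / c) ^ 2 - a = 1 / (1 - r ^ 2) := by
  have key : (r * c / d + r / c) ^ 2 - a - 1 / (1 - r ^ 2) =
      (r ^ 2 - (d ^ 2 * a + (r ^ 2 - d) ^ 2)) / d ^ 2 := by
    rw [← hc]
    field_simp
    linear_combination (r ^ 2 * c ^ 2 + d ^ 2) * hc
  rw [← sub_eq_zero (a := (_ : ℝ) ^ 2 - a), key, div_eq_zero_iff, sub_eq_zero, eq_comm]
  simp [hd]

lemma exists_abs_eq_and_sq_add_iff {t a b k : ℝ} :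
    (∃ q ≠ 0, |q| = t ∧ (q + a) ^ 2 - b = k) ↔
      (0 < t ∧ (t + a) ^ 2 - b = k) ∨ (0 < t ∧ (t - a) ^ 2 - b = k) := by
  constructor
  · rintro ⟨q, hq, rfl, h⟩
    rcases abs_cases q with ⟨hqa, -⟩ | ⟨hqa, -⟩
    · exact .inl ⟨abs_pos.mpr hq, by rw [hqa]; exact h⟩
    · exact .inr ⟨abs_pos.mpr hq, by rw [hqa]; linear_combination h⟩
  · rintro (⟨ht, h⟩ | ⟨ht, h⟩)
    · exact ⟨t, ht.ne', abs_of_pos ht, h⟩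
    · exact ⟨-t, neg_ne_zero.mpr ht.ne', by rw [abs_neg, abs_of_pos ht], by linear_combination h⟩

lemma spherePhi_image {n : ℕ} {r : ℝ} (hr0 : 0 < r) (hr1 : r < 1) :
    spherePhi n r '' {x | ‖x‖ = r ∧ x (Fin.last n) ≠ r ^ 2} =
      {p | ∃ q ≠ 0, |q| = p.2 ∧ (q + r / √(1 - r ^ 2)) ^ 2 - ‖p.1‖ ^ 2 = 1 / (1 - r ^ 2)} := by
  have hc : √(1 - r ^ 2) ^ 2 = 1 - r ^ 2 := sq_sqrt (by nlinarith)
  have hc0 : 0 < √(1 - r ^ 2) := sqrt_pos.mpr (by nlinarith)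
  have hrc : 0 < r * √(1 - r ^ 2) := mul_pos hr0 hc0
  ext ⟨y, t⟩
  constructor
  · rintro ⟨x, ⟨hx, hlast⟩, hΦ⟩
    obtain ⟨rfl, rfl⟩ := Prod.ext_iff.mp hΦ
    set d := r ^ 2 - x (Fin.last n) with hd_def
    have hd : d ≠ 0 := sub_ne_zero.mpr hlast.symm
    refine ⟨r * √(1 - r ^ 2) / d, div_ne_zero hrc.ne' hd, ?_, ?_⟩
    · simp [spherePhi, abs_div, abs_of_pos hrc, d]
    · rw [← sq_mul_add_sq_eq_sq_iff hc hc0.ne' hd, sub_sub_cancel,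
        ← EuclideanSpace.norm_sq_eq_of_castSucc_eq_mul, hx]
      intro i
      simp [spherePhi, ← hd_def, mul_div_cancel₀ _ hd]
  · rintro ⟨q, hq, rfl, hyp⟩
    set d := r * √(1 - r ^ 2) / q with hd_def
    have hd : d ≠ 0 := div_ne_zero hrc.ne' hq
    set x : EuclideanSpace ℝ (Fin (n + 1)) :=
      WithLp.toLp 2 (Fin.snoc (α := fun _ => ℝ) (fun i => d * y i) (r ^ 2 - d))
    have hcast : ∀ i : Fin n, x i.castSucc = d * y i := by simp [x]
    have hlast : x (Fin.last n) = r ^ 2 - d := by simp [x]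
    have hnorm : ‖x‖ ^ 2 = r ^ 2 := by
      rw [EuclideanSpace.norm_sq_eq_of_castSucc_eq_mul hcast, hlast,
        sq_mul_add_sq_eq_sq_iff hc hc0.ne' hd, hd_def, div_div_cancel₀ hrc.ne']
      exact hyp
    refine ⟨x, ⟨(sq_eq_sq₀ (norm_nonneg x) hr0.le).mp hnorm, by simpa [hlast] using hd⟩, ?_⟩
    simp only [spherePhi, hcast, hlast, sub_sub_cancel, mul_div_cancel_left₀ _ hd]
    simp [abs_div, abs_of_pos hrc, d, div_div_cancel₀ hrc.ne']

theorem stmt9_general (n : ℕ) (r : ℝ) (hr0 : 0 < r) (hr1 : r < 1) :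
    spherePhi n r ''
        {x : EuclideanSpace ℝ (Fin (n + 1)) | ‖x‖ = r ∧ x (Fin.last n) ≠ r ^ 2} =
      {p : EuclideanSpace ℝ (Fin n) × ℝ | 0 < p.2 ∧
          (p.2 + r / Real.sqrt (1 - r ^ 2)) ^ 2 - ‖p.1‖ ^ 2 = 1 / (1 - r ^ 2)} ∪
        {p : EuclideanSpace ℝ (Fin n) × ℝ | 0 < p.2 ∧
          (p.2 - r / Real.sqrt (1 - r ^ 2)) ^ 2 - ‖p.1‖ ^ 2 = 1 / (1 - r ^ 2)} := by
  rw [spherePhi_image hr0 hr1]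
  ext p
  exact exists_abs_eq_and_sq_add_iff

/-- The image of the surface map of the sphere of radius `r` centered at the origin is the
union of the two upper elliptic hyperboloid sheets
`(t ± r/√(1 − r²))² − |y|² = 1/(1 − r²)`, `t > 0`. -/
theorem stmt9 (n : ℕ) (hn : 2 ≤ n) (r : ℝ) (hr0 : 0 < r) (hr1 : r < 1) :
    spherePhi n r ''
        {x : EuclideanSpace ℝ (Fin (n + 1)) | ‖x‖ = r ∧ x (Fin.last n) ≠ r ^ 2} =
      {p : EuclideanSpace ℝ (Fin n) × ℝ | 0 < p.2 ∧
          (p.2 + r / Real.sqrt (1 - r ^ 2)) ^ 2 - ‖p.1‖ ^ 2 = 1 / (1 - r ^ 2)} ∪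
        {p : EuclideanSpace ℝ (Fin n) × ℝ | 0 < p.2 ∧
          (p.2 - r / Real.sqrt (1 - r ^ 2)) ^ 2 - ‖p.1‖ ^ 2 = 1 / (1 - r ^ 2)} :=
  stmt9_general n r hr0 hr1
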